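/- In the association scheme on the 240 roots of E_8 with relations given by inner products 2, 1, 0, -1, -2 (indexed 0 through 4), the intersection number p_{13}^1 equals 1; that is, for any two roots x, y with ⟨x,y⟩ = 1, there is exactly one root z with ⟨z,x⟩ = 1 and ⟨z,y⟩ = -1. -/

import Mathlib

/-- The root system `E_8` in `ℝ^8` (240 vectors of squared norm 2). -/
def rootsE8 : Set (Fin 8 → ℝ) :=
  {v | ∃ i j : Fin 8, i < j ∧
    (v = Pi.single i 1 + Pi.single j (1 : ℝ) ∨
     v = Pi.single i 1 - Pi.single j (1 : ℝ) ∨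
     v = -(Pi.single i 1 + Pi.single j (1 : ℝ)) ∨
     v = -(Pi.single i 1 - Pi.single j (1 : ℝ)))} ∪
  {v | ∃ c : Fin 8 → ℝ, (∀ i, c i = 1 ∨ c i = -1) ∧ (∏ i, c i) = 1 ∧
    v = (1 / 2 : ℝ) • c}

/-- The standard inner product on `ℝ^8`. -/
def dot (x y : Fin 8 → ℝ) : ℝ := ∑ i, x i * y i

/-!
The `E_8` roots are exactly the vectors of squared norm `2` in the `E_8` lattice (coordinates all
in `ℤ` or all in `ℤ + 1/2`, with even sum). If `⟨x, y⟩ = 1`, then `x - y` lies in the lattice and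
has squared norm `2 - 2 + 2 = 2`, so it is a root, and `⟨x - y, x⟩ = 1`, `⟨x - y, y⟩ = -1`.
Conversely, any root `z` with these inner products has `⟨z, x - y⟩ = 2 = ‖z‖² = ‖x - y‖²`, hence
`‖z - (x - y)‖² = 0`.
-/

open Finset Matrix

lemma dot_eq_dotProduct (x y : Fin 8 → ℝ) : dot x y = x ⬝ᵥ y := rfl

lemma eq_of_dotProduct_eq {ι : Type*} [Fintype ι] {z w : ι → ℝ} {r : ℝ} (hz : z ⬝ᵥ z = r)
    (hw : w ⬝ᵥ w = r) (hzw : z ⬝ᵥ w = r) : z = w := by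
  rw [← sub_eq_zero, ← dotProduct_self_eq_zero]
  simp only [sub_dotProduct, dotProduct_sub, dotProduct_comm w z, hz, hw, hzw]
  ring

lemma single_add_single_dotProduct_self {ι R : Type*} [Fintype ι] [DecidableEq ι] [CommRing R]
    {i j : ι} (hij : i ≠ j) (a b : R) :
    (Pi.single i a + Pi.single j b) ⬝ᵥ (Pi.single i a + Pi.single j b) = a * a + b * b := by
  simp [hij, hij.symm]

lemma exists_eq_single_add_single {ι : Type*} [Fintype ι] [DecidableEq ι] {v : ι → ℝ}
    (hv : ∀ k, v k = -1 ∨ v k = 0 ∨ v k = 1) (h2 : v ⬝ᵥ v = 2) :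
    ∃ i j, i ≠ j ∧ (v i = 1 ∨ v i = -1) ∧ (v j = 1 ∨ v j = -1) ∧
      v = Pi.single i (v i) + Pi.single j (v j) := by
  have hsq : ∀ k, v k * v k = if v k ≠ 0 then 1 else 0 := by
    intro k; rcases hv k with h | h | h <;> simp [h]
  have hcard : #{k | v k ≠ 0} = 2 := by
    simp only [dotProduct, hsq, sum_boole] at h2
    exact_mod_cast h2
  obtain ⟨i, j, hij, hS⟩ := card_eq_two.1 hcard
  have hsupp : ∀ k, v k ≠ 0 ↔ k = i ∨ k = j := by
    intro k; simpa using congrArg (k ∈ ·) hS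
  have hsign : ∀ k, v k ≠ 0 → v k = 1 ∨ v k = -1 := by
    intro k hk; rcases hv k with h | h | h <;> simp_all
  refine ⟨i, j, hij, hsign i ((hsupp i).2 (.inl rfl)), hsign j ((hsupp j).2 (.inr rfl)), ?_⟩
  funext k
  by_cases hki : k = i
  · subst hki; simp [hij]
  by_cases hkj : k = j
  · subst hkj; simp [hki]
  simpa [hki, hkj] using mt (hsupp k).1 (by tauto)

section SignVector

variable {ι : Type*} [Fintype ι] {c : ι → ℝ}

lemma sum_eq_card_sub_two_mul_card_neg (hc : ∀ i, c i = 1 ∨ c i = -1) :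
    ∑ i, c i = Fintype.card ι - 2 * #{i | c i = -1} := by
  rw [← sum_filter_add_sum_filter_not univ (fun i => c i = -1),
    sum_congr rfl fun i hi => (mem_filter.1 hi).2,
    sum_congr rfl fun i hi => (hc i).resolve_right (mem_filter.1 hi).2]
  have hcard := card_filter_add_card_filter_not (s := univ) (fun i => c i = -1)
  rw [card_univ] at hcard
  simp only [sum_const, nsmul_eq_mul, mul_neg, mul_one, ← hcard]
  push_cast
  ring

lemma prod_eq_neg_one_pow_card_neg (hc : ∀ i, c i = 1 ∨ c i = -1) :
    ∏ i, c i = (-1) ^ #{i | c i = -1} := by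
  rw [← prod_filter_mul_prod_filter_not univ (fun i => c i = -1),
    prod_congr rfl fun i hi => (mem_filter.1 hi).2,
    prod_congr rfl fun i hi => (hc i).resolve_right (mem_filter.1 hi).2]
  simp

lemma prod_eq_one_iff_exists_sum_eq (hc : ∀ i, c i = 1 ∨ c i = -1) :
    ∏ i, c i = 1 ↔ ∃ n : ℤ, ∑ i, c i = Fintype.card ι - 4 * n := by
  rw [prod_eq_neg_one_pow_card_neg hc, neg_one_pow_eq_one_iff_even (by norm_num),
    sum_eq_card_sub_two_mul_card_neg hc]
  constructor
  · rintro ⟨m, hm⟩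
    exact ⟨m, by rw [hm]; push_cast; ring⟩
  · rintro ⟨n, hn⟩
    have hcard : (#{i | c i = -1} : ℝ) = 2 * n := by linarith
    have hcard' : ((#{i | c i = -1} : ℕ) : ℤ) = 2 * n := by exact_mod_cast hcard
    exact (Int.even_coe_nat _).1 ⟨n, by omega⟩

end SignVector

lemma exists_int_eq_two_mul_add_one {x : ℝ} (hx : x = 1 ∨ x = -1) : ∃ n : ℤ, x = 2 * n + 1 := by
  rcases hx with rfl | rfl
  exacts [⟨0, by norm_num⟩, ⟨-1, by norm_num⟩]

lemma single_add_single_mem_rootsE8 {i j : Fin 8} (hij : i ≠ j) {a b : ℝ}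
    (ha : a = 1 ∨ a = -1) (hb : b = 1 ∨ b = -1) : Pi.single i a + Pi.single j b ∈ rootsE8 := by
  wlog hlt : i < j generalizing i j a b
  · rw [add_comm]
    exact this hij.symm hb ha (hij.symm.lt_of_le (not_lt.1 hlt))
  left
  refine ⟨i, j, hlt, ?_⟩
  rcases ha with rfl | rfl <;> rcases hb with rfl | rfl
  · exact .inl rfl
  · exact .inr (.inl (by rw [Pi.single_neg]; abel))
  · exact .inr (.inr (.inr (by rw [Pi.single_neg]; abel)))
  · exact .inr (.inr (.inl (by rw [Pi.single_neg, Pi.single_neg]; abel)))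

lemma rootsE8_cases {v : Fin 8 → ℝ} (hv : v ∈ rootsE8) :
    (∃ i j : Fin 8, ∃ a b : ℝ, i ≠ j ∧ (a = 1 ∨ a = -1) ∧ (b = 1 ∨ b = -1) ∧
      v = Pi.single i a + Pi.single j b) ∨
    ∃ c : Fin 8 → ℝ, (∀ i, c i = 1 ∨ c i = -1) ∧ ∏ i, c i = 1 ∧ v = (1 / 2 : ℝ) • c := by
  rcases hv with ⟨i, j, hij, rfl | rfl | rfl | rfl⟩ | hc
  · exact .inl ⟨i, j, 1, 1, hij.ne, by norm_num, by norm_num, rfl⟩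
  · exact .inl ⟨i, j, 1, -1, hij.ne, by norm_num, by norm_num, by rw [Pi.single_neg]; abel⟩
  · exact .inl ⟨i, j, -1, -1, hij.ne, by norm_num, by norm_num, by
      rw [Pi.single_neg, Pi.single_neg]; abel⟩
  · exact .inl ⟨i, j, -1, 1, hij.ne, by norm_num, by norm_num, by rw [Pi.single_neg]; abel⟩
  · exact .inr hc

/-- `2 vᵢ ∈ ℤ` and `vᵢ - vⱼ ∈ ℤ` say that the coordinates lie all in `ℤ` or all in `ℤ + 1/2`;
in this form closure under addition is immediate. -/
def e8Lattice : AddSubgroup (Fin 8 → ℝ) where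
  carrier := {v | (∀ i, ∃ n : ℤ, 2 * v i = n) ∧ (∀ i j, ∃ n : ℤ, v i - v j = n) ∧
    ∃ n : ℤ, ∑ i, v i = 2 * n}
  zero_mem' := ⟨fun _ => ⟨0, by simp⟩, fun _ _ => ⟨0, by simp⟩, ⟨0, by simp⟩⟩
  add_mem' := by
    rintro v w ⟨hv₁, hv₂, n, hn⟩ ⟨hw₁, hw₂, m, hm⟩
    refine ⟨fun i => ?_, fun i j => ?_, n + m, ?_⟩
    · obtain ⟨a, ha⟩ := hv₁ i
      obtain ⟨b, hb⟩ := hw₁ i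
      exact ⟨a + b, by push_cast [Pi.add_apply, ← ha, ← hb]; ring⟩
    · obtain ⟨a, ha⟩ := hv₂ i j
      obtain ⟨b, hb⟩ := hw₂ i j
      exact ⟨a + b, by push_cast [Pi.add_apply, ← ha, ← hb]; ring⟩
    · simp only [Pi.add_apply, sum_add_distrib, hn, hm]
      push_cast
      ring
  neg_mem' := by
    rintro v ⟨hv₁, hv₂, n, hn⟩
    refine ⟨fun i => ?_, fun i j => ?_, -n, ?_⟩
    · obtain ⟨a, ha⟩ := hv₁ i
      exact ⟨-a, by push_cast [Pi.neg_apply, ← ha]; ring⟩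
    · obtain ⟨a, ha⟩ := hv₂ i j
      exact ⟨-a, by push_cast [Pi.neg_apply, ← ha]; ring⟩
    · simp only [Pi.neg_apply, sum_neg_distrib, hn]
      push_cast
      ring

lemma mem_e8Lattice_of_int {v : Fin 8 → ℝ} (hv : ∀ i, ∃ n : ℤ, v i = n)
    (hs : ∃ n : ℤ, ∑ i, v i = 2 * n) : v ∈ e8Lattice := by
  refine ⟨fun i => ?_, fun i j => ?_, hs⟩
  · obtain ⟨a, ha⟩ := hv i
    exact ⟨2 * a, by push_cast [ha]; ring⟩
  · obtain ⟨a, ha⟩ := hv i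
    obtain ⟨b, hb⟩ := hv j
    exact ⟨a - b, by push_cast [ha, hb]; ring⟩

lemma single_add_single_mem_e8Lattice (i j : Fin 8) {a b : ℝ}
    (ha : a = 1 ∨ a = -1) (hb : b = 1 ∨ b = -1) : Pi.single i a + Pi.single j b ∈ e8Lattice := by
  obtain ⟨m, rfl⟩ := exists_int_eq_two_mul_add_one ha
  obtain ⟨n, rfl⟩ := exists_int_eq_two_mul_add_one hb
  refine mem_e8Lattice_of_int (fun k => ?_) ⟨m + n + 1, ?_⟩
  · refine ⟨(Pi.single i (2 * m + 1) + Pi.single j (2 * n + 1) : Fin 8 → ℤ) k, ?_⟩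
    simp only [Pi.add_apply, Pi.single_apply]
    split_ifs <;> push_cast <;> ring
  · simp only [Pi.add_apply, sum_add_distrib, sum_pi_single', mem_univ, ↓reduceIte]
    push_cast
    ring

lemma half_smul_mem_e8Lattice {c : Fin 8 → ℝ} (hc : ∀ i, c i = 1 ∨ c i = -1)
    (hp : ∏ i, c i = 1) : (1 / 2 : ℝ) • c ∈ e8Lattice := by
  choose m hm using fun i => exists_int_eq_two_mul_add_one (hc i)
  obtain ⟨n, hn⟩ := (prod_eq_one_iff_exists_sum_eq hc).1 hp
  refine ⟨fun i => ⟨2 * m i + 1, ?_⟩, fun i j => ⟨m i - m j, ?_⟩, ⟨2 - n, ?_⟩⟩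
  · simp [hm]
  · simp only [Pi.smul_apply, smul_eq_mul, hm]; push_cast; ring
  · simp only [Pi.smul_apply, smul_eq_mul, ← mul_sum, hn]
    simp only [Fintype.card_fin]; push_cast
    ring

lemma mem_rootsE8_of_int {v : Fin 8 → ℝ} (hv : ∀ i, ∃ n : ℤ, v i = n) (h2 : v ⬝ᵥ v = 2) :
    v ∈ rootsE8 := by
  have hle : ∀ k, v k * v k ≤ 2 := fun k =>
    h2 ▸ single_le_sum (fun i _ => mul_self_nonneg (v i)) (mem_univ k)
  have hv' : ∀ k, v k = -1 ∨ v k = 0 ∨ v k = 1 := by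
    intro k
    obtain ⟨n, hn⟩ := hv k
    have : n * n ≤ 2 := by exact_mod_cast hn ▸ hle k
    have : -1 ≤ n ∧ n ≤ 1 := by constructor <;> nlinarith
    rcases (by omega : n = -1 ∨ n = 0 ∨ n = 1) with rfl | rfl | rfl <;> simp [hn]
  obtain ⟨i, j, hij, hi, hj, hv⟩ := exists_eq_single_add_single hv' h2
  exact hv ▸ single_add_single_mem_rootsE8 hij hi hj

lemma mem_rootsE8_of_half {v : Fin 8 → ℝ} (hv : ∀ i, ∃ n : ℤ, 2 * v i = 2 * n + 1)
    (hs : ∃ n : ℤ, ∑ i, v i = 2 * n) (h2 : v ⬝ᵥ v = 2) : v ∈ rootsE8 := by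
  set c : Fin 8 → ℝ := fun i => 2 * v i
  -- The eight odd integers `cᵢ` have squares `≥ 1` summing to `4 ‖v‖² = 8`, so all are `±1`.
  have hge : ∀ i, 0 ≤ c i * c i - 1 := by
    intro i
    obtain ⟨n, hn⟩ := hv i
    have hnn : 0 ≤ n * (n + 1) := by rcases le_or_gt 0 n with h | h <;> nlinarith
    have hnn' : (0 : ℝ) ≤ n * (n + 1) := by exact_mod_cast hnn
    simp only [c, hn]
    nlinarith
  have hsum : ∑ i, (c i * c i - 1) = 0 := by
    have hcc : ∑ i, c i * c i = 4 * (v ⬝ᵥ v) := by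
      simp only [c, dotProduct, mul_sum]
      exact sum_congr rfl fun i _ => by ring
    rw [sum_sub_distrib, hcc, h2]
    simp only [sum_const, card_univ, Fintype.card_fin, nsmul_eq_mul]
    norm_num
  have hc : ∀ i, c i = 1 ∨ c i = -1 := fun i =>
    mul_self_eq_one_iff.1 (sub_eq_zero.1 ((sum_eq_zero_iff_of_nonneg fun i _ => hge i).1 hsum i
      (mem_univ i)))
  have hp : ∏ i, c i = 1 := by
    obtain ⟨n, hn⟩ := hs
    refine (prod_eq_one_iff_exists_sum_eq hc).2 ⟨2 - n, ?_⟩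
    simp only [c, ← mul_sum, hn, Fintype.card_fin]
    push_cast
    ring
  exact .inr ⟨c, hc, hp, by funext i; simp [c]⟩

theorem mem_rootsE8_iff {v : Fin 8 → ℝ} : v ∈ rootsE8 ↔ v ∈ e8Lattice ∧ v ⬝ᵥ v = 2 := by
  constructor
  · intro hv
    rcases rootsE8_cases hv with ⟨i, j, a, b, hij, ha, hb, rfl⟩ | ⟨c, hc, hp, rfl⟩
    · refine ⟨single_add_single_mem_e8Lattice i j ha hb, ?_⟩
      rw [single_add_single_dotProduct_self hij]
      rcases ha with rfl | rfl <;> rcases hb with rfl | rfl <;> norm_num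
    · refine ⟨half_smul_mem_e8Lattice hc hp, ?_⟩
      have hsq : ∀ i, (1 / 2 * c i) * (1 / 2 * c i) = 1 / 4 := fun i => by
        rw [mul_mul_mul_comm, mul_self_eq_one_iff.2 (hc i)]; norm_num
      simp only [dotProduct, Pi.smul_apply, smul_eq_mul, hsq, sum_const, card_univ,
        Fintype.card_fin]
      norm_num
  · rintro ⟨⟨hv₁, hv₂, hs⟩, h2⟩
    obtain ⟨m, hm⟩ := hv₁ 0
    -- The parity of `2 v₀` decides whether all coordinates are integers or all in `ℤ + 1/2`.
    obtain ⟨k, rfl | rfl⟩ := Int.even_or_odd' m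
    · refine mem_rootsE8_of_int (fun i => ?_) h2
      obtain ⟨n, hn⟩ := hv₂ 0 i
      exact ⟨k - n, by push_cast at hm ⊢; linarith⟩
    · refine mem_rootsE8_of_half (fun i => ?_) hs h2
      obtain ⟨n, hn⟩ := hv₂ 0 i
      exact ⟨k - n, by push_cast at hm ⊢; linarith⟩

/-- In the `E_8` association scheme, `p_{13}^1 = 1`: for any roots `x, y` with
`⟨x, y⟩ = 1` there is exactly one root `z` with `⟨z, x⟩ = 1` and `⟨z, y⟩ = -1`. -/
theorem stmt_15 :
    ∀ x ∈ rootsE8, ∀ y ∈ rootsE8, dot x y = 1 →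
      ∃! z, z ∈ rootsE8 ∧ dot z x = 1 ∧ dot z y = -1 := by
  intro x hx y hy hxy
  simp only [dot_eq_dotProduct] at hxy ⊢
  obtain ⟨hxL, hxx⟩ := mem_rootsE8_iff.1 hx
  obtain ⟨hyL, hyy⟩ := mem_rootsE8_iff.1 hy
  have hyx : y ⬝ᵥ x = 1 := dotProduct_comm y x ▸ hxy
  have hdiff : (x - y) ⬝ᵥ (x - y) = 2 := by
    simp only [sub_dotProduct, dotProduct_sub, hxx, hyy, hxy, hyx]; norm_num
  refine ⟨x - y, ⟨mem_rootsE8_iff.2 ⟨sub_mem hxL hyL, hdiff⟩, ?_, ?_⟩, ?_⟩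
  · simp only [sub_dotProduct, hxx, hyx]; norm_num
  · simp only [sub_dotProduct, hxy, hyy]; norm_num
  rintro z ⟨hz, hzx, hzy⟩
  refine eq_of_dotProduct_eq (mem_rootsE8_iff.1 hz).2 hdiff ?_
  simp only [dotProduct_sub, hzx, hzy]; norm_num
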